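/- Let ξ = α+β with α = Ω·α̃ a multiple of Ω and β < Ω, and let β' < β. If Θ*(ξ) > 0, then Θ_X(α+β') ≤ Θ*(ξ). -/

import Mathlib

open Ordinal Set

noncomputable section
open scoped Classical

/-- `Ω`, the first uncountable ordinal. -/
def OmegaO : Ordinal := (Cardinal.aleph 1).ord

/-- `ε_{Ω+1}`, the least `ε > Ω` with `ω ^ ε = ε`. -/
def epsOmega : Ordinal := nfp (fun a => Ordinal.omega0 ^ a) (OmegaO + 1)

lemma omega0_le_OmegaO : Ordinal.omega0 ≤ OmegaO := by
  rw [OmegaO, ← Cardinal.ord_aleph0]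
  exact Cardinal.ord_le_ord.2 (Cardinal.aleph0_le_aleph 1)

lemma one_lt_OmegaO : 1 < OmegaO :=
  lt_of_lt_of_le Ordinal.one_lt_omega0 omega0_le_OmegaO

lemma OmegaO_pos : 0 < OmegaO := lt_trans zero_lt_one one_lt_OmegaO

/-- `ξ*`, the maximal coefficient in the `Ω`-normal form of `ξ`. -/
def star (ξ : Ordinal) : Ordinal :=
  if h0 : ξ = 0 then 0
  else if hl : log OmegaO ξ < ξ then
    max (max (star (log OmegaO ξ)) (star (ξ % OmegaO ^ log OmegaO ξ)))
      (ξ / OmegaO ^ log OmegaO ξ)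
  else 0
termination_by ξ
decreasing_by
  · exact hl
  · exact mod_opow_log_lt_self _ h0

/-- The generalized fundamental sequence `ξ[θ]`. -/
def fs (ξ θ : Ordinal) : Ordinal :=
  if h0 : ξ ≤ 1 then 0
  else if hmod : ξ % OmegaO ^ log OmegaO ξ ≠ 0 then
    OmegaO ^ log OmegaO ξ * (ξ / OmegaO ^ log OmegaO ξ) + fs (ξ % OmegaO ^ log OmegaO ξ) θ
  else if Order.IsSuccLimit (ξ / OmegaO ^ log OmegaO ξ) then OmegaO ^ log OmegaO ξ * θ
  else if hβ : ξ / OmegaO ^ log OmegaO ξ = 1 then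
    (if hlog : Order.IsSuccLimit (log OmegaO ξ) then
       (if hll : log OmegaO ξ < ξ then OmegaO ^ fs (log OmegaO ξ) θ else 0)
     else OmegaO ^ Ordinal.pred (log OmegaO ξ) * θ)
  else
    OmegaO ^ log OmegaO ξ * Ordinal.pred (ξ / OmegaO ^ log OmegaO ξ) + fs (OmegaO ^ log OmegaO ξ) θ
termination_by ξ
decreasing_by
  · exact mod_opow_log_lt_self _ (by intro h; exact h0 (by simp [h]))
  · exact hll
  · -- `Ω ^ log Ω ξ < ξ`
    have hξ0 : ξ ≠ 0 := by intro h; exact h0 (by simp [h])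
    have hle : OmegaO ^ log OmegaO ξ ≤ ξ := opow_log_le_self _ hξ0
    have hpos : 0 < OmegaO ^ log OmegaO ξ :=
      opow_pos _ OmegaO_pos
    have hβ0 : 0 < ξ / OmegaO ^ log OmegaO ξ :=
      Ordinal.div_pos (by positivity) |>.2 hle
    have hβ1 : 1 < ξ / OmegaO ^ log OmegaO ξ :=
      lt_of_le_of_ne (Ordinal.one_le_iff_ne_zero.2 hβ0.ne') (Ne.symm hβ)
    calc OmegaO ^ log OmegaO ξ = OmegaO ^ log OmegaO ξ * 1 := (mul_one _).symm
      _ < OmegaO ^ log OmegaO ξ * (ξ / OmegaO ^ log OmegaO ξ) := by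
          exact mul_lt_mul_of_pos_left hβ1 hpos
      _ ≤ ξ := Ordinal.mul_div_le _ _

/-- The terminal part `τ(ξ)`. -/
def tau (ξ : Ordinal) : Ordinal :=
  if h0 : ξ = 0 then 0
  else if hmod : ξ % OmegaO ^ log OmegaO ξ ≠ 0 then tau (ξ % OmegaO ^ log OmegaO ξ)
  else if Order.IsSuccLimit (ξ / OmegaO ^ log OmegaO ξ) then ξ / OmegaO ^ log OmegaO ξ
  else if log OmegaO ξ = 0 then 1
  else if hlog : Order.IsSuccLimit (log OmegaO ξ) then
    (if hll : log OmegaO ξ < ξ then tau (log OmegaO ξ) else 0)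
  else OmegaO
termination_by ξ
decreasing_by
  · exact mod_opow_log_lt_self _ h0
  · exact hll

/-- The collapsing function `Θ_X`. -/
def ThetaF (X : Set Ordinal) (ξ : Ordinal) : Ordinal :=
  sInf {θ | θ ∈ X ∧ star ξ < θ ∧ ∀ ζ, ζ < ξ → star ζ < θ → ThetaF X ζ < θ}
termination_by ξ
decreasing_by exact by assumption

/-- `Ω_n`: the tower `Ω_0 = 1`, `Ω_{n+1} = Ω ^ Ω_n`. -/
def OmegaTow : ℕ → Ordinal
  | 0 => 1
  | n + 1 => OmegaO ^ OmegaTow n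

/-- `Θ_X(ε_{Ω+1}) = sup_n Θ_X(Ω_n)`. -/
def ThetaEps (X : Set Ordinal) : Ordinal := ⨆ n : ℕ, ThetaF X (OmegaTow n)

/-- `ε̂_{Ω+1}`. -/
def hatEps (X : Set Ordinal) : Set Ordinal :=
  {ξ | ξ < epsOmega ∧ star ξ < ThetaEps X}

/-- `X` is a club in `Ω`. -/
def IsClubBelowOmega (X : Set Ordinal) : Prop :=
  (∀ x ∈ X, x < OmegaO) ∧
  (∀ a, a < OmegaO → ∃ x ∈ X, a < x) ∧
  (∀ S : Set Ordinal, S ⊆ X → S.Nonempty → sSup S < OmegaO → sSup S ∈ X)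

/-- The set of limit points of `X` (below `Ω`). -/
def limitPtsOf (X : Set Ordinal) : Set Ordinal :=
  {x | 0 < x ∧ ∀ y, y < x → ∃ z ∈ X, y < z ∧ z < x}

/-- `FIX(X)`. -/
def FIXs (X : Set Ordinal) : Set Ordinal :=
  {ξ | ξ < epsOmega ∧ star (fs ξ 1) < star ξ ∧ star ξ = tau ξ ∧
    ∃ γ, ξ < γ ∧ γ < epsOmega ∧ star ξ = ThetaF X γ}

/-- `JUMP(X)`. -/
def JUMPs (X : Set Ordinal) : Set Ordinal :=
  {0} ∪ {ξ | ∃ ζ, ξ = ζ + 1} ∪ FIXs X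

/-- `Θ*`. -/
def ThetaStarF (X : Set Ordinal) (ξ : Ordinal) : Ordinal :=
  if ∃ ζ, ξ = ζ + 1 then ThetaF X (Ordinal.pred ξ)
  else if ξ ∈ FIXs X then tau ξ
  else 0

/-- `ξ̌`. -/
def checkF (X : Set Ordinal) (ξ : Ordinal) : Ordinal :=
  if 0 < ThetaStarF X ξ then OmegaO * (ξ / OmegaO) else ξ

/-- `ℙ`, the club of countable additively indecomposable ordinals. -/
def PP : Set Ordinal := {x | x < OmegaO ∧ ∃ a, x = Ordinal.omega0 ^ a}

/-- `1 + Ord`, the club of nonzero countable ordinals. -/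
def oneOrdS : Set Ordinal := {x | 0 < x ∧ x < OmegaO}

/-- `Θ^{(i)}(ξ)`. -/
def ThetaIter (X : Set Ordinal) (ξ : Ordinal) : ℕ → Ordinal
  | 0 => ThetaStarF X ξ
  | n + 1 => ThetaF X (fs (checkF X ξ) (ThetaIter X ξ n))

/-- A Buchholz system of fundamental sequences for `Θ_X`. -/
def IsBuchholz (X : Set Ordinal) (B : Ordinal → ℕ → Ordinal) : Prop :=
  (∀ n, B 0 n = 0) ∧
  (∀ α ξ n, ξ ∈ hatEps X → OmegaO ≤ ξ → tau ξ < OmegaO → ξ = fs α (tau ξ) →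
    B ξ n = fs α (B (tau ξ) n)) ∧
  (∀ ξ n, ξ ∈ hatEps X → 0 < tau (checkF X ξ) → tau (checkF X ξ) < OmegaO →
    B (ThetaF X ξ) n = ThetaF X (B (checkF X ξ) n + ThetaStarF X ξ)) ∧
  (∀ ξ n, ξ ∈ hatEps X → tau (checkF X ξ) = OmegaO →
    B (ThetaF X ξ) n = ThetaIter X ξ n)

/-- The additional clause for the `σ = Θ_{1+Ord}` Buchholz system. -/
def SigmaExtra (B : Ordinal → ℕ → Ordinal) : Prop :=
  ∀ β n, β < OmegaO → B (ThetaF oneOrdS β) n = β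

/-- The additional clauses for the `ϑ = Θ_ℙ` Buchholz system. -/
def VarthetaExtra (B : Ordinal → ℕ → Ordinal) : Prop :=
  (∀ α β n, 0 < β → (∀ α' < α, α' + β < α + β) → B (α + β) n = α + B β n) ∧
  (∀ β n, β < OmegaO → β ∈ JUMPs PP → B (ThetaF PP β) n = ThetaStarF PP β * n)

/-!
Write `ξ = x + β` with `Ω ∣ x` and `β < Ω`. In the `Ω`-normal form, `β` is simply the last
countable coefficient of `ξ`, so `(x + β)* = max x* β` and, for limit `β`, `(x + β)[1] = x + 1`.
Hence `(x + β')* < Θ*(ξ)` for `β' < β`: in the successor case `β = β₀ + 1` because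
`(x + β₀)* < Θ_X(x + β₀)`, and in the `FIX(X)` case because `x* ≤ (ξ[1])* < ξ* = Θ_X(γ)` and
`β' < β ≤ ξ*`. Since also `x + β' < x + β₀` resp. `x + β' < γ`, the defining closure property
of `Θ_X` gives the claim.
-/

lemma OmegaO_ne_zero : OmegaO ≠ 0 := OmegaO_pos.ne'

lemma log_OmegaO_lt_self {ξ : Ordinal} (h0 : ξ ≠ 0) (hξ : ξ < epsOmega) : log OmegaO ξ < ξ := by
  -- otherwise `ξ` is a fixed point of `ω ^ ·` above `Ω`, contradicting the minimality of `ε_{Ω+1}`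
  by_contra! hle
  have hopow : OmegaO ^ ξ ≤ ξ :=
    (opow_le_opow_right OmegaO_pos hle).trans (opow_log_le_self _ h0)
  have hΩξ : OmegaO ≤ ξ := calc
    OmegaO = OmegaO ^ (1 : Ordinal) := (opow_one _).symm
    _ ≤ OmegaO ^ ξ := opow_le_opow_right OmegaO_pos (Order.one_le_iff_ne_zero.2 h0)
    _ ≤ ξ := hopow
  have hΩlt : OmegaO < ξ := calc
    OmegaO = OmegaO ^ (1 : Ordinal) := (opow_one _).symm
    _ < OmegaO ^ OmegaO := (opow_lt_opow_iff_right one_lt_OmegaO).2 one_lt_OmegaO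
    _ ≤ OmegaO ^ ξ := opow_le_opow_right OmegaO_pos hΩξ
    _ ≤ ξ := hopow
  have hfix : ω ^ ξ ≤ ξ := (opow_le_opow_left ξ omega0_le_OmegaO).trans hopow
  exact hξ.not_ge <| nfp_le_fp (isNormal_opow one_lt_omega0).monotone
    (Order.add_one_le_of_lt hΩlt) hfix

lemma mul_add_lt_mul {b v w x : Ordinal} (hw : w < b) (hv : v < x) : b * v + w < b * x := by
  simpa using opow_mul_add_lt_opow_mul (u := 1) (by simpa using hw) hv

lemma add_div_of_mod_add_lt {x y p : Ordinal} (hp : p ≠ 0) (h : x % p + y < p) :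
    (x + y) / p = x / p := by
  conv_lhs => rw [← div_add_mod x p, add_assoc]
  rw [mul_add_div _ hp, div_eq_zero_of_lt h, add_zero]

lemma add_mod_of_mod_add_lt {x y p : Ordinal} (h : x % p + y < p) :
    (x + y) % p = x % p + y := by
  conv_lhs => rw [← div_add_mod x p, add_assoc]
  rw [mul_add_mod_self, mod_eq_of_lt h]

section MultipleOfOmega

variable {x δ : Ordinal}

lemma OmegaO_dvd_opow_log (hx : OmegaO ∣ x) (h0 : x ≠ 0) : OmegaO ∣ OmegaO ^ log OmegaO x := by
  simpa using opow_dvd_opow OmegaO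
    (Order.one_le_iff_pos.2 (log_pos one_lt_OmegaO h0 (le_of_dvd h0 hx)))

lemma OmegaO_dvd_mod_opow_log (hx : OmegaO ∣ x) : OmegaO ∣ x % OmegaO ^ log OmegaO x := by
  rcases eq_or_ne x 0 with rfl | h0
  · simp
  rw [← dvd_add_iff (dvd_mul_of_dvd_left (OmegaO_dvd_opow_log hx h0) _), div_add_mod]
  exact hx

lemma mod_opow_log_add_lt (hx : OmegaO ∣ x) (h0 : x ≠ 0) (hδ : δ < OmegaO) :
    x % OmegaO ^ log OmegaO x + δ < OmegaO ^ log OmegaO x := by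
  obtain ⟨r, hr⟩ := OmegaO_dvd_mod_opow_log hx
  obtain ⟨s, hs⟩ := OmegaO_dvd_opow_log hx h0
  have hrs : OmegaO * r < OmegaO * s :=
    hr ▸ hs ▸ mod_lt x (opow_ne_zero _ OmegaO_ne_zero)
  rw [hr, hs]
  exact mul_add_lt_mul hδ ((mul_lt_mul_iff_right₀ OmegaO_pos).1 hrs)

lemma log_OmegaO_add (hx : OmegaO ∣ x) (h0 : x ≠ 0) (hδ : δ < OmegaO) :
    log OmegaO (x + δ) = log OmegaO x := by
  conv_lhs => rw [← div_add_mod x (OmegaO ^ log OmegaO x), add_assoc]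
  rw [log_opow_mul_add one_lt_OmegaO (div_opow_log_pos _ h0).ne' (mod_opow_log_add_lt hx h0 hδ),
    log_eq_zero (div_opow_log_lt x one_lt_OmegaO), add_zero]

lemma add_div_opow_log (hx : OmegaO ∣ x) (h0 : x ≠ 0) (hδ : δ < OmegaO) :
    (x + δ) / OmegaO ^ log OmegaO (x + δ) = x / OmegaO ^ log OmegaO x := by
  rw [log_OmegaO_add hx h0 hδ,
    add_div_of_mod_add_lt (opow_ne_zero _ OmegaO_ne_zero) (mod_opow_log_add_lt hx h0 hδ)]

lemma add_mod_opow_log (hx : OmegaO ∣ x) (h0 : x ≠ 0) (hδ : δ < OmegaO) :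
    (x + δ) % OmegaO ^ log OmegaO (x + δ) = x % OmegaO ^ log OmegaO x + δ := by
  rw [log_OmegaO_add hx h0 hδ, add_mod_of_mod_add_lt (mod_opow_log_add_lt hx h0 hδ)]

end MultipleOfOmega

lemma star_zero' : _root_.star 0 = 0 := by
  rw [_root_.star, dif_pos rfl]

lemma star_of_lt_OmegaO {δ : Ordinal} (h0 : δ ≠ 0) (hδ : δ < OmegaO) : _root_.star δ = δ := by
  rw [_root_.star, dif_neg h0, log_eq_zero hδ, dif_pos (pos_iff_ne_zero.2 h0)]
  simp [star_zero', mod_one]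

lemma star_eq_max {ξ : Ordinal} (h0 : ξ ≠ 0) (hξ : ξ < epsOmega) :
    _root_.star ξ = max (max (_root_.star (log OmegaO ξ))
      (_root_.star (ξ % OmegaO ^ log OmegaO ξ))) (ξ / OmegaO ^ log OmegaO ξ) := by
  rw [_root_.star, dif_neg h0, dif_pos (log_OmegaO_lt_self h0 hξ)]

lemma star_add {x δ : Ordinal} (hx : OmegaO ∣ x) (hδ0 : δ ≠ 0) (hδ : δ < OmegaO)
    (hε : x + δ < epsOmega) : _root_.star (x + δ) = max (_root_.star x) δ := by
  induction x using WellFoundedLT.induction with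
  | ind x ih =>
  rcases eq_or_ne x 0 with rfl | h0
  · rw [zero_add, star_of_lt_OmegaO hδ0 hδ, star_zero', max_eq_right (zero_le (a := δ))]
  have hxδ0 : x + δ ≠ 0 := fun h ↦ h0 (left_eq_zero_of_add_eq_zero h)
  have hmod : x % OmegaO ^ log OmegaO x + δ < epsOmega :=
    (add_le_add_left (mod_le _ _) δ).trans_lt hε
  rw [star_eq_max hxδ0 hε, star_eq_max h0 ((le_self_add).trans_lt hε),
    add_div_opow_log hx h0 hδ, add_mod_opow_log hx h0 hδ, log_OmegaO_add hx h0 hδ,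
    ih _ (mod_opow_log_lt_self _ h0) (OmegaO_dvd_mod_opow_log hx) hmod]
  ac_rfl

lemma star_add_le {x δ : Ordinal} (hx : OmegaO ∣ x) (hδ : δ < OmegaO) (hε : x + δ < epsOmega) :
    _root_.star (x + δ) ≤ max (_root_.star x) δ := by
  rcases eq_or_ne δ 0 with rfl | hδ0
  · simp
  · exact (star_add hx hδ0 hδ hε).le

lemma fs_add_of_isSuccLimit {x β : Ordinal} (hx : OmegaO ∣ x) (hβ : Order.IsSuccLimit β)
    (hβΩ : β < OmegaO) : fs (x + β) 1 = x + 1 := by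
  induction x using WellFoundedLT.induction with
  | ind x ih =>
  have hβ1 : ¬ x + β ≤ 1 := (one_lt_of_isSuccLimit hβ).trans_le le_add_self |>.not_ge
  rcases eq_or_ne x 0 with rfl | h0
  · rw [zero_add] at hβ1 ⊢
    rw [fs, dif_neg hβ1, log_eq_zero hβΩ]
    simp [mod_one, hβ]
  have hmod : (x + β) % OmegaO ^ log OmegaO (x + β) ≠ 0 := by
    rw [add_mod_opow_log hx h0 hβΩ]
    exact fun h ↦ hβ.ne_bot (right_eq_zero_of_add_eq_zero h)
  rw [fs, dif_neg hβ1, dif_pos hmod, add_div_opow_log hx h0 hβΩ, add_mod_opow_log hx h0 hβΩ,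
    log_OmegaO_add hx h0 hβΩ, ih _ (mod_opow_log_lt_self _ h0) (OmegaO_dvd_mod_opow_log hx),
    ← add_assoc, div_add_mod]

section Collapsing

variable {X : Set Ordinal}

lemma ThetaF_spec {γ : Ordinal} (h : 0 < ThetaF X γ) :
    _root_.star γ < ThetaF X γ ∧
      ∀ ζ < γ, _root_.star ζ < ThetaF X γ → ThetaF X ζ < ThetaF X γ := by
  rw [ThetaF] at h ⊢
  have hne : {θ | θ ∈ X ∧ _root_.star γ < θ ∧
      ∀ ζ < γ, _root_.star ζ < θ → ThetaF X ζ < θ}.Nonempty := by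
    by_contra hempty
    rw [not_nonempty_iff_eq_empty] at hempty
    simp [hempty] at h
  exact (csInf_mem hne).2

lemma star_lt_ThetaF {γ : Ordinal} (h : 0 < ThetaF X γ) : _root_.star γ < ThetaF X γ :=
  (ThetaF_spec h).1

lemma ThetaF_lt_ThetaF {γ ζ : Ordinal} (h : 0 < ThetaF X γ) (hζ : ζ < γ)
    (hstar : _root_.star ζ < ThetaF X γ) : ThetaF X ζ < ThetaF X γ :=
  (ThetaF_spec h).2 ζ hζ hstar

lemma ThetaStarF_add_one (ξ : Ordinal) : ThetaStarF X (ξ + 1) = ThetaF X ξ := by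
  rw [ThetaStarF, if_pos ⟨ξ, rfl⟩, pred_add_one]

lemma ThetaStarF_of_isSuccLimit {ξ : Ordinal} (hξ : Order.IsSuccLimit ξ) :
    ThetaStarF X ξ = if ξ ∈ FIXs X then tau ξ else 0 := by
  rw [ThetaStarF, if_neg]
  rintro ⟨ζ, rfl⟩
  exact hξ.succ_ne ζ (Order.succ_eq_add_one ζ)

variable {x β β' : Ordinal}

lemma ThetaF_add_le_ThetaF_add (hx : OmegaO ∣ x) (hβ : β < OmegaO) (hε : x + β < epsOmega)
    (hβ' : β' ≤ β) (hpos : 0 < ThetaF X (x + β)) : ThetaF X (x + β') ≤ ThetaF X (x + β) := by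
  rcases hβ'.eq_or_lt with rfl | hlt
  · exact le_rfl
  refine (ThetaF_lt_ThetaF hpos ((add_lt_add_iff_left x).2 hlt) ?_).le
  calc _root_.star (x + β') ≤ max (_root_.star x) β' :=
        star_add_le hx (hlt.trans hβ) ((add_le_add_right hlt.le x).trans_lt hε)
    _ ≤ max (_root_.star x) β := max_le_max le_rfl hlt.le
    _ = _root_.star (x + β) := (star_add hx (pos_of_gt hlt).ne' hβ hε).symm
    _ < ThetaF X (x + β) := star_lt_ThetaF hpos

lemma ThetaF_add_lt_tau (hx : OmegaO ∣ x) (hβ : Order.IsSuccLimit β) (hβΩ : β < OmegaO)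
    (hmem : x + β ∈ FIXs X) (hβ' : β' < β) (hpos : 0 < tau (x + β)) :
    ThetaF X (x + β') < tau (x + β) := by
  obtain ⟨hε, hfs, htau, γ, hγ, -, hγΘ⟩ := hmem
  rw [← htau, hγΘ] at hpos ⊢
  rw [hγΘ, fs_add_of_isSuccLimit hx hβ hβΩ] at hfs
  rw [star_add hx hβ.ne_bot hβΩ hε] at hγΘ
  have hxε : x + 1 < epsOmega := (add_le_add_right (one_lt_of_isSuccLimit hβ).le x).trans_lt hε
  have hstar_x : _root_.star x < ThetaF X γ :=
    (le_max_left _ _).trans_lt (star_add hx one_ne_zero one_lt_OmegaO hxε ▸ hfs)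
  have hβ'Θ : β' < ThetaF X γ := hβ'.trans_le (hγΘ ▸ le_max_right _ _)
  refine ThetaF_lt_ThetaF hpos (((add_lt_add_iff_left x).2 hβ').trans hγ) ?_
  exact (star_add_le hx (hβ'.trans hβΩ) ((add_le_add_right hβ'.le x).trans_lt hε)).trans_lt
    (max_lt hstar_x hβ'Θ)

end Collapsing

theorem stmt9_general (X : Set Ordinal)
    (αt α β β' : Ordinal) (hα : α = OmegaO * αt) (hβ : β < OmegaO)
    (hdom : α + β < epsOmega) (hβ' : β' < β) (hpos : 0 < ThetaStarF X (α + β)) :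
    ThetaF X (α + β') ≤ ThetaStarF X (α + β) := by
  have hdvd : OmegaO ∣ α := ⟨αt, hα⟩
  rcases zero_or_succ_or_isSuccLimit β with rfl | ⟨β₀, rfl⟩ | hlim
  · exact absurd hβ' (not_lt_bot (a := β'))
  · rw [Order.succ_eq_add_one, ← add_assoc, ThetaStarF_add_one] at hpos ⊢
    exact ThetaF_add_le_ThetaF_add hdvd ((Order.lt_succ β₀).trans hβ)
      (((add_lt_add_iff_left α).2 (Order.lt_succ β₀)).trans hdom) (Order.lt_succ_iff.1 hβ') hpos
  · rw [ThetaStarF_of_isSuccLimit (isSuccLimit_add α hlim)] at hpos ⊢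
    split_ifs at hpos ⊢ with hmem
    · exact (ThetaF_add_lt_tau hdvd hlim hβ hmem hβ' hpos).le
    · exact absurd hpos (lt_irrefl 0)

/-- If `Θ*(α+β) > 0` then `Θ_X(α+β') ≤ Θ*(α+β)` for `β' < β`. -/
theorem stmt9 (X : Set Ordinal) (hX : IsClubBelowOmega X) (h0X : 0 ∉ X)
    (αt α β β' : Ordinal) (hα : α = OmegaO * αt) (hβ : β < OmegaO)
    (hdom : α + β < epsOmega) (hβ' : β' < β) (hpos : 0 < ThetaStarF X (α + β)) :
    ThetaF X (α + β') ≤ ThetaStarF X (α + β) :=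
  stmt9_general X αt α β β' hα hβ hdom hβ' hpos

end
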